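/- Let T ∈ L(H) be an operator on a separable infinite-dimensional complex Hilbert space H. If the interior of the point spectrum σ_p(T; H) = {λ ∈ ℂ : Ker(T − λI) ≠ {0}} is empty, then T is not a universal operator. -/

import Mathlib

/-!
The backward shift `S` on `ℓ²(ℕ)` has every `z` with `‖z‖ < 1` as an eigenvalue, with
eigenvector `(zⁿ)ₙ`. An orthonormal sequence in an infinite-dimensional Hilbert space `H` gives
an isometry `L : ℓ²(ℕ) → H` with `L† L = 1`, and `L S L†` carries these eigenvalues over to `H`.
If `T` were universal, a restriction of `T` would be similar to `c • L S L†` with `c ≠ 0`, so the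
disc of radius `‖c‖` would lie in the point spectrum of `T`.
-/

noncomputable section

/-- Universal operator on a complex Hilbert space. -/
def IsUniversal {H : Type*} [NormedAddCommGroup H] [InnerProductSpace ℂ H]
    (U : H →L[ℂ] H) : Prop :=
  ∀ T : H →L[ℂ] H, ∃ M : Submodule ℂ H, IsClosed (M : Set H) ∧ (∀ x ∈ M, U x ∈ M) ∧
    ∃ c : ℂ, c ≠ 0 ∧ ∃ J : H ≃L[ℂ] M, ∀ x : H, U (J x : H) = c • ((J (T x) : H))

/-- The point spectrum of an operator: the set of its eigenvalues. -/
def pointSpectrum {H : Type*} [NormedAddCommGroup H] [InnerProductSpace ℂ H]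
    (T : H →L[ℂ] H) : Set ℂ :=
  {z : ℂ | LinearMap.ker ((T - z • (1 : H →L[ℂ] H) : H →L[ℂ] H) : H →ₗ[ℂ] H) ≠ ⊥}

open Metric

theorem Module.End.HasEigenvalue.mul_of_intertwines {R V W : Type*} [CommRing R]
    [AddCommGroup V] [Module R V] [AddCommGroup W] [Module R W]
    {f : Module.End R V} {g : Module.End R W} {J : V →ₗ[R] W} (hJ : Function.Injective J)
    {c : R} (h : ∀ x, g (J x) = c • J (f x)) {μ : R} (hμ : f.HasEigenvalue μ) :
    g.HasEigenvalue (c * μ) := by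
  obtain ⟨v, hv⟩ := hμ.exists_hasEigenvector
  refine Module.End.hasEigenvalue_of_hasEigenvector (x := J v) ⟨?_, ?_⟩
  · rw [Module.End.mem_eigenspace_iff, h, hv.apply_eq_smul, map_smul, smul_smul]
  · exact (map_ne_zero_iff J hJ).2 hv.2

theorem exists_orthonormal_nat {𝕜 E : Type*} [RCLike 𝕜] [NormedAddCommGroup E]
    [InnerProductSpace 𝕜 E] (h : ¬FiniteDimensional 𝕜 E) : ∃ e : ℕ → E, Orthonormal 𝕜 e := by
  let b := Module.Basis.ofVectorSpace 𝕜 E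
  have : Infinite (Module.Basis.ofVectorSpaceIndex 𝕜 E) :=
    not_finite_iff_infinite.1 fun _ => h (Module.Finite.of_basis b)
  exact ⟨_, InnerProductSpace.gramSchmidtNormed_orthonormal
    (b.linearIndependent.comp _ (Infinite.natEmbedding _).injective)⟩

namespace lp

variable {𝕜 : Type*} [NormedField 𝕜]

theorem memℓp_two_comp_succ (f : lp (fun _ : ℕ => 𝕜) 2) : Memℓp (fun n => f (n + 1)) 2 :=
  memℓp_gen <| ((lp.memℓp f).summable (by norm_num)).comp_injective (add_left_injective 1)

variable (𝕜) in
def backwardShift : lp (fun _ : ℕ => 𝕜) 2 →L[𝕜] lp (fun _ : ℕ => 𝕜) 2 :=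
  LinearMap.mkContinuous
    { toFun f := ⟨fun n => f (n + 1), memℓp_two_comp_succ f⟩
      map_add' f g := rfl
      map_smul' c f := rfl }
    1 fun f => by
      rw [one_mul]
      refine lp.norm_le_of_tsum_le (by norm_num) (norm_nonneg f) ?_
      rw [lp.norm_rpow_eq_tsum (by norm_num) f]
      exact tsum_comp_le_tsum_of_inj ((lp.memℓp f).summable (by norm_num))
        (fun _ => by positivity) (add_left_injective 1)

@[simp]
theorem backwardShift_apply (f : lp (fun _ : ℕ => 𝕜) 2) (n : ℕ) :
    backwardShift 𝕜 f n = f (n + 1) := rfl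

theorem memℓp_two_geometric {z : 𝕜} (hz : ‖z‖ < 1) : Memℓp (fun n => z ^ n) 2 := by
  refine memℓp_gen ?_
  simp only [norm_pow, ENNReal.toReal_ofNat, Real.rpow_ofNat, ← pow_mul]
  simp only [pow_mul']
  exact summable_geometric_of_lt_one (by positivity) (pow_lt_one₀ (norm_nonneg z) hz two_ne_zero)

theorem hasEigenvalue_backwardShift {z : 𝕜} (hz : ‖z‖ < 1) :
    Module.End.HasEigenvalue (backwardShift 𝕜 : Module.End 𝕜 (lp (fun _ : ℕ => 𝕜) 2)) z := by
  let v : lp (fun _ : ℕ => 𝕜) 2 := ⟨fun n => z ^ n, memℓp_two_geometric hz⟩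
  refine Module.End.hasEigenvalue_of_hasEigenvector (x := v) ⟨?_, fun h => ?_⟩
  · rw [Module.End.mem_eigenspace_iff]
    ext n
    simp [v, pow_succ']
  · simpa [v] using congrArg (· 0) h

end lp

section PointSpectrum

variable {H : Type*} [NormedAddCommGroup H] [InnerProductSpace ℂ H]

theorem mem_pointSpectrum_iff {T : H →L[ℂ] H} {z : ℂ} :
    z ∈ pointSpectrum T ↔ Module.End.HasEigenvalue (T : Module.End ℂ H) z := by
  rw [Module.End.hasEigenvalue_iff, Module.End.eigenspace_def]
  rfl

theorem exists_ball_subset_pointSpectrum_of_isUniversal {T S : H →L[ℂ] H} (hT : IsUniversal T)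
    (hS : ball 0 1 ⊆ pointSpectrum S) : ∃ r > 0, ball 0 r ⊆ pointSpectrum T := by
  obtain ⟨M, -, -, c, hc, J, hJ⟩ := hT S
  refine ⟨‖c‖, norm_pos_iff.2 hc, fun μ hμ => ?_⟩
  have hμc : μ / c ∈ ball 0 1 := by
    rwa [mem_ball_zero_iff, norm_div, div_lt_one (norm_pos_iff.2 hc), ← mem_ball_zero_iff]
  rw [← mul_div_cancel₀ μ hc, mem_pointSpectrum_iff]
  exact (mem_pointSpectrum_iff.1 (hS hμc)).mul_of_intertwines
    (J := M.subtype ∘ₗ (J : H →ₗ[ℂ] M)) (M.injective_subtype.comp J.injective) hJ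

theorem exists_ball_one_subset_pointSpectrum [CompleteSpace H] (hinf : ¬FiniteDimensional ℂ H) :
    ∃ S : H →L[ℂ] H, ball 0 1 ⊆ pointSpectrum S := by
  obtain ⟨e, he⟩ := exists_orthonormal_nat hinf
  let L := he.orthogonalFamily.linearIsometry
  have hL : ∀ f, L.toContinuousLinearMap.adjoint (L f) = f := fun f =>
    congr($(L.adjoint_comp_self) f)
  refine ⟨L.toContinuousLinearMap ∘L lp.backwardShift ℂ ∘L L.toContinuousLinearMap.adjoint,
    fun z hz => ?_⟩
  rw [mem_pointSpectrum_iff, ← one_mul z]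
  refine (lp.hasEigenvalue_backwardShift (mem_ball_zero_iff.1 hz)).mul_of_intertwines
    (J := L.toLinearMap) L.injective fun f => ?_
  simp [hL]

end PointSpectrum

theorem not_universal_of_interior_pointSpectrum_empty {H : Type*} [NormedAddCommGroup H]
    [InnerProductSpace ℂ H] [CompleteSpace H]
    (hinf : ¬ FiniteDimensional ℂ H)
    (T : H →L[ℂ] H) (h : interior (pointSpectrum T) = ∅) :
    ¬ IsUniversal T := by
  intro hT
  obtain ⟨S, hS⟩ := exists_ball_one_subset_pointSpectrum hinf
  obtain ⟨r, hr, hball⟩ := exists_ball_subset_pointSpectrum_of_isUniversal hT hS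
  have := interior_maximal hball isOpen_ball (mem_ball_self hr)
  rwa [h] at this

end
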